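/- Let μ_i, σ_i > 0, and let μ̂_i, σ̂_i be the tilted moments given by μ̂_i = μ_i + y σ_i² φ(z)/(Φ(z)√(1+σ_i²)), σ̂_i² = σ_i² − (σ_i⁴ φ(z)/((1+σ_i²)Φ(z)))(z + φ(z)/Φ(z)) with z = yμ_i/√(1+σ_i²) and y ∈ {-1,1}. Define the EP site parameters σ̃_i² = (σ̂_i⁻² − σ_i⁻²)⁻¹ and μ̃_i = σ̃_i²(σ̂_i⁻² μ̂_i − σ_i⁻² μ_i). Then (μ̃_i − μ_i)/(σ_i² + σ̃_i²) = (μ̂_i − μ_i)/σ_i² = y φ(z)/(Φ(z)√(1+σ_i²)). -/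

import Mathlib

open MeasureTheory
open Filter Set Real Topology
open scoped ENNReal

noncomputable def stdPdf (x : ℝ) : ℝ :=
  (Real.sqrt (2 * Real.pi))⁻¹ * Real.exp (-x ^ 2 / 2)

noncomputable def stdCdf (x : ℝ) : ℝ := ∫ u in Set.Iic x, stdPdf u

lemma stdPdf_pos (x : ℝ) : 0 < stdPdf x := by
  have h2 : (0:ℝ) < Real.sqrt (2 * Real.pi) := Real.sqrt_pos.2 (by positivity)
  exact mul_pos (inv_pos.2 h2) (Real.exp_pos _)

lemma stdPdf_eq (x : ℝ) : stdPdf x = (Real.sqrt (2 * Real.pi))⁻¹ * Real.exp (-(1/2) * x ^ 2) := by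
  rw [stdPdf]; congr 1; ring_nf

lemma integrable_stdPdf : Integrable stdPdf := by
  have h := (integrable_exp_neg_mul_sq (by norm_num : (0:ℝ) < 1/2)).const_mul
    (Real.sqrt (2 * Real.pi))⁻¹
  exact h.congr (by filter_upwards with x; rw [stdPdf_eq])

lemma integrable_mul_stdPdf : Integrable (fun u : ℝ => u * stdPdf u) := by
  have h := (integrable_mul_exp_neg_mul_sq (by norm_num : (0:ℝ) < 1/2)).const_mul
    (Real.sqrt (2 * Real.pi))⁻¹
  exact h.congr (by filter_upwards with x; rw [stdPdf_eq]; ring)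

lemma integrable_sq_mul_stdPdf : Integrable (fun u : ℝ => u ^ 2 * stdPdf u) := by
  have h := (integrable_rpow_mul_exp_neg_mul_sq (by norm_num : (0:ℝ) < 1/2)
    (by norm_num : (-1:ℝ) < 2)).const_mul (Real.sqrt (2 * Real.pi))⁻¹
  refine h.congr ?_
  filter_upwards with x
  rw [stdPdf_eq, Real.rpow_two]; ring

lemma integrable_neg_mul_stdPdf : Integrable (fun u : ℝ => -u * stdPdf u) := by
  have h := integrable_mul_stdPdf.const_mul (-1 : ℝ)
  exact h.congr (by filter_upwards with x; ring)

lemma hasDerivAt_stdPdf (x : ℝ) : HasDerivAt stdPdf (-x * stdPdf x) x := by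
  have h1 : HasDerivAt (fun x : ℝ => -x ^ 2 / 2) (-x) x := by
    have := ((hasDerivAt_pow 2 x).neg).div_const 2
    refine this.congr_deriv ?_; push_cast; ring
  have h2 := (h1.exp).const_mul (Real.sqrt (2 * Real.pi))⁻¹
  refine h2.congr_deriv ?_
  rw [stdPdf]; ring

lemma tendsto_stdPdf_atBot : Tendsto stdPdf atBot (𝓝 0) := by
  have hsq : Tendsto (fun x : ℝ => x ^ 2) atBot atTop := by
    have h := (tendsto_pow_atTop (by norm_num : (2:ℕ) ≠ 0)).comp
      (tendsto_abs_atBot_atTop : Tendsto (fun x : ℝ => |x|) atBot atTop)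
    refine h.congr fun x => ?_
    simp [Function.comp, sq_abs]
  have h1 : Tendsto (fun x : ℝ => -x ^ 2 / 2) atBot atBot :=
    (tendsto_neg_atTop_atBot.comp hsq).atBot_div_const (by norm_num)
  have h2 : Tendsto (fun x : ℝ => (Real.sqrt (2 * Real.pi))⁻¹ * Real.exp (-x ^ 2 / 2))
      atBot (𝓝 ((Real.sqrt (2 * Real.pi))⁻¹ * 0)) :=
    (Real.tendsto_exp_atBot.comp h1).const_mul _
  rw [mul_zero] at h2
  exact h2

lemma tendsto_mul_stdPdf_atBot : Tendsto (fun x : ℝ => -x * stdPdf x) atBot (𝓝 0) := by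
  have hlin : Tendsto (fun x : ℝ => -(1/2 : ℝ) * x) atTop atBot := by
    have := (tendsto_neg_atTop_atBot : Tendsto (fun x:ℝ => -x) atTop atBot).atBot_div_const (by norm_num : (0:ℝ) < 2)
    refine this.congr fun x => ?_
    ring
  have hg : Tendsto (fun x : ℝ => x ^ (1:ℝ) * Real.exp (-(1/2) * x ^ 2)) atTop (𝓝 0) :=
    (rpow_mul_exp_neg_mul_sq_isLittleO_exp_neg (by norm_num : (0:ℝ) < 1/2)
      (1:ℝ)).trans_tendsto (Real.tendsto_exp_atBot.comp hlin)
  have hg' : Tendsto (fun x : ℝ => x * Real.exp (-(1/2) * x ^ 2)) atTop (𝓝 0) :=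
    hg.congr fun x => by rw [Real.rpow_one]
  have hcomp := hg'.comp tendsto_neg_atBot_atTop
  have h2 : Tendsto (fun x : ℝ => (Real.sqrt (2 * Real.pi))⁻¹ *
      (-x * Real.exp (-(1/2) * (-x) ^ 2))) atBot
      (𝓝 ((Real.sqrt (2 * Real.pi))⁻¹ * 0)) := hcomp.const_mul _
  rw [mul_zero] at h2
  refine h2.congr fun x => ?_
  rw [neg_sq, stdPdf_eq]; ring

lemma stdCdf_pos (z : ℝ) : 0 < stdCdf z := by
  rw [stdCdf, setIntegral_pos_iff_support_of_nonneg_ae]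
  · have hsub : Set.Iic z ⊆ Function.support stdPdf ∩ Set.Iic z := by
      intro x hx
      exact ⟨(stdPdf_pos x).ne', hx⟩
    calc (0:ℝ≥0∞) < volume (Set.Iic z) := by simp
      _ ≤ volume (Function.support stdPdf ∩ Set.Iic z) := measure_mono hsub
  · filter_upwards with x using (stdPdf_pos x).le
  · exact integrable_stdPdf.integrableOn

lemma integral_neg_mul_stdPdf (z : ℝ) :
    ∫ u in Set.Iic z, (-u * stdPdf u) = stdPdf z := by
  have h := integral_Iic_of_hasDerivAt_of_tendsto' (a := z)
    (fun x _ => hasDerivAt_stdPdf x)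
    integrable_neg_mul_stdPdf.integrableOn
    tendsto_stdPdf_atBot
  rw [sub_zero] at h
  exact h

lemma integral_mul_stdPdf (z : ℝ) :
    ∫ u in Set.Iic z, u * stdPdf u = -stdPdf z := by
  have h := integral_neg_mul_stdPdf z
  simp_rw [neg_mul] at h
  rw [integral_neg] at h
  linarith

lemma integral_sq_mul_stdPdf (z : ℝ) :
    ∫ u in Set.Iic z, u ^ 2 * stdPdf u = stdCdf z - z * stdPdf z := by
  have hder : ∀ x ∈ Set.Iic z, HasDerivAt (fun u : ℝ => -u * stdPdf u)
      (x ^ 2 * stdPdf x - stdPdf x) x := by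
    intro x _
    have h0 : HasDerivAt (fun u : ℝ => -u) (-1) x := (hasDerivAt_id x).neg
    have := h0.mul (hasDerivAt_stdPdf x)
    refine this.congr_deriv ?_
    ring
  have hint : IntegrableOn (fun u : ℝ => u ^ 2 * stdPdf u - stdPdf u) (Set.Iic z) :=
    (integrable_sq_mul_stdPdf.sub integrable_stdPdf).integrableOn
  have h := integral_Iic_of_hasDerivAt_of_tendsto' hder hint tendsto_mul_stdPdf_atBot
  rw [integral_sub integrable_sq_mul_stdPdf.integrableOn integrable_stdPdf.integrableOn] at h
  have hc : stdCdf z = ∫ u in Set.Iic z, stdPdf u := rfl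
  rw [← hc] at h
  simp only [sub_zero] at h
  linarith

lemma key_pos (z : ℝ) : 0 < stdPdf z + z * stdCdf z := by
  have hval : ∫ u in Set.Iic z, (z - u) * stdPdf u = stdPdf z + z * stdCdf z := by
    have h1 : ∀ u : ℝ, (z - u) * stdPdf u = z * stdPdf u - u * stdPdf u := fun u => by ring
    simp_rw [h1]
    rw [integral_sub (integrable_stdPdf.integrableOn.const_mul z)
      integrable_mul_stdPdf.integrableOn, integral_const_mul, integral_mul_stdPdf]
    have hc : stdCdf z = ∫ u in Set.Iic z, stdPdf u := rfl
    rw [← hc]; ring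
  rw [← hval, setIntegral_pos_iff_support_of_nonneg_ae]
  · have hsub : Set.Iio z ⊆ Function.support (fun u => (z - u) * stdPdf u) ∩ Set.Iic z := by
      intro x hx
      have hxz : x < z := hx
      refine ⟨?_, le_of_lt hxz⟩
      have : 0 < (z - x) * stdPdf x := mul_pos (by linarith) (stdPdf_pos x)
      exact this.ne'
    calc (0:ℝ≥0∞) < volume (Set.Iio z) := by simp
      _ ≤ _ := measure_mono hsub
  · filter_upwards [ae_restrict_mem measurableSet_Iic] with x hx
    have hxz : x ≤ z := hx
    exact mul_nonneg (by linarith) (stdPdf_pos x).le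
  · have h := (integrable_stdPdf.const_mul z).sub integrable_mul_stdPdf
    exact (h.congr (by filter_upwards with x; simp only [Pi.sub_apply]; ring)).integrableOn

lemma key_le (z : ℝ) : stdPdf z * (stdPdf z + z * stdCdf z) ≤ stdCdf z ^ 2 := by
  have hCpos : 0 < stdCdf z := stdCdf_pos z
  set A : ℝ := ∫ u in Set.Iic z, u ^ 2 * stdPdf u with hA
  set B : ℝ := ∫ u in Set.Iic z, u * stdPdf u with hB
  set C : ℝ := stdCdf z with hC
  set t : ℝ := B / C with ht
  have h0 : 0 ≤ ∫ u in Set.Iic z, (u - t) ^ 2 * stdPdf u :=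
    setIntegral_nonneg measurableSet_Iic fun u _ => mul_nonneg (sq_nonneg _) (stdPdf_pos u).le
  have i2 : Integrable (fun u : ℝ => 2 * t * (u * stdPdf u)) (volume.restrict (Set.Iic z)) :=
    (integrable_mul_stdPdf.integrableOn).const_mul _
  have i1 : Integrable (fun u : ℝ => u ^ 2 * stdPdf u - 2 * t * (u * stdPdf u))
      (volume.restrict (Set.Iic z)) := integrable_sq_mul_stdPdf.integrableOn.sub i2
  have i3 : Integrable (fun u : ℝ => t ^ 2 * stdPdf u) (volume.restrict (Set.Iic z)) :=
    (integrable_stdPdf.integrableOn).const_mul _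
  have hexp : ∫ u in Set.Iic z, (u - t) ^ 2 * stdPdf u = A - 2 * t * B + t ^ 2 * C := by
    have h1 : ∀ u : ℝ, (u - t) ^ 2 * stdPdf u
        = (u ^ 2 * stdPdf u - 2 * t * (u * stdPdf u)) + t ^ 2 * stdPdf u := fun u => by ring
    simp_rw [h1]
    rw [integral_add i1 i3, integral_sub integrable_sq_mul_stdPdf.integrableOn i2,
      integral_const_mul, integral_const_mul]
    rfl
  have hineq : B ^ 2 ≤ A * C := by
    rw [hexp] at h0
    have htt : A - 2 * t * B + t ^ 2 * C = A - B ^ 2 / C := by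
      rw [ht]; field_simp; ring
    rw [htt] at h0
    have := (div_le_iff₀ hCpos).1 (by linarith : B ^ 2 / C ≤ A)
    nlinarith
  rw [hA, integral_sq_mul_stdPdf] at hineq
  rw [hB, integral_mul_stdPdf] at hineq
  rw [← hC] at hineq
  nlinarith [hineq]

lemma alg_step (s h μ μh : ℝ) (hs : 0 < s) (h0 : 0 < h) (hhs : h < s) :
    ((h⁻¹ - s⁻¹)⁻¹ * (h⁻¹ * μh - s⁻¹ * μ) - μ) / (s + (h⁻¹ - s⁻¹)⁻¹) = (μh - μ) / s := by
  have hsne : s ≠ 0 := hs.ne'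
  have hhne : h ≠ 0 := h0.ne'
  have hinv : s⁻¹ < h⁻¹ := by
    exact (inv_lt_inv₀ hs h0).2 hhs
  have hdne : h⁻¹ - s⁻¹ ≠ 0 := by
    have : 0 < h⁻¹ - s⁻¹ := by linarith
    exact this.ne'
  have hteq : (h⁻¹ - s⁻¹)⁻¹ = h * s / (s - h) := by
    rw [inv_eq_iff_eq_inv]
    field_simp
  have hshne : s - h ≠ 0 := by linarith
  rw [hteq]
  have hden : s + h * s / (s - h) = s * s / (s - h) := by
    field_simp
    ring
  rw [hden]
  have hd2 : s * s / (s - h) ≠ 0 := by positivity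
  field_simp
  ring

/-- EP site-parameter identity:
`(μ̃ − μ)/(σ² + σ̃²) = (μ̂ − μ)/σ² = y φ(z)/(Φ(z)√(1+σ²))`. -/
theorem stmt10 (y μi σi : ℝ) (hy : y = -1 ∨ y = 1) (hσ : 0 < σi)
    (z : ℝ) (hz : z = y * μi / Real.sqrt (1 + σi ^ 2))
    (μhat : ℝ) (hμhat : μhat = μi + y * σi ^ 2 * stdPdf z /
      (stdCdf z * Real.sqrt (1 + σi ^ 2)))
    (σhat2 : ℝ) (hσhat2 : σhat2 = σi ^ 2 -
      σi ^ 4 * stdPdf z / ((1 + σi ^ 2) * stdCdf z) * (z + stdPdf z / stdCdf z))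
    (σtil2 : ℝ) (hσtil2 : σtil2 = (σhat2⁻¹ - (σi ^ 2)⁻¹)⁻¹)
    (μtil : ℝ) (hμtil : μtil = σtil2 * (σhat2⁻¹ * μhat - (σi ^ 2)⁻¹ * μi)) :
    (μtil - μi) / (σi ^ 2 + σtil2) = (μhat - μi) / σi ^ 2 ∧
    (μhat - μi) / σi ^ 2 = y * stdPdf z / (stdCdf z * Real.sqrt (1 + σi ^ 2)) := by
  have hφ := stdPdf_pos z
  have hΦ := stdCdf_pos z
  have hA := key_pos z
  have hB := key_le z
  have hs2 : (0:ℝ) < σi ^ 2 := by positivity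
  have hS : (0:ℝ) < 1 + σi ^ 2 := by positivity
  have hr : 0 < Real.sqrt (1 + σi ^ 2) := Real.sqrt_pos.2 hS
  constructor
  · -- bounds on σhat2
    have heq1 : (σi ^ 2 - σhat2) * ((1 + σi ^ 2) * stdCdf z ^ 2)
        = σi ^ 4 * stdPdf z * (z * stdCdf z + stdPdf z) := by
      rw [hσhat2]
      field_simp
      ring_nf
      try exact Or.inl trivial
    have hMpos : (0:ℝ) < (1 + σi ^ 2) * stdCdf z ^ 2 := by positivity
    have hRpos : (0:ℝ) < σi ^ 4 * stdPdf z * (z * stdCdf z + stdPdf z) := by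
      have h4 : (0:ℝ) < σi ^ 4 := by positivity
      have : (0:ℝ) < z * stdCdf z + stdPdf z := by linarith
      positivity
    have hhlt : σhat2 < σi ^ 2 := by nlinarith [heq1, hRpos, hMpos]
    have hhpos : 0 < σhat2 := by
      have hkey : σi ^ 4 * stdPdf z * (z * stdCdf z + stdPdf z)
          < σi ^ 2 * ((1 + σi ^ 2) * stdCdf z ^ 2) := by
        have h1 : σi ^ 2 * (stdPdf z * (stdPdf z + z * stdCdf z))
            < (1 + σi ^ 2) * (stdPdf z * (stdPdf z + z * stdCdf z)) := by
          have := mul_pos hφ hA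
          nlinarith
        have h2 : (1 + σi ^ 2) * (stdPdf z * (stdPdf z + z * stdCdf z))
            ≤ (1 + σi ^ 2) * stdCdf z ^ 2 := by nlinarith
        nlinarith [sq_nonneg σi]
      nlinarith [heq1, hMpos, hkey]
    rw [hμtil, hσtil2]
    exact alg_step (σi ^ 2) σhat2 μi μhat hs2 hhpos hhlt
  · rw [hμhat]
    have hd : stdCdf z * Real.sqrt (1 + σi ^ 2) ≠ 0 := by positivity
    field_simp
    ring
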